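/- Every element of an MV-algebra that is not 0 lies outside some prime ideal; equivalently, the intersection of all prime ideals of an MV-algebra is {0}. Consequently, the map sending a to the family ([a]_P)_{P prime} of its classes in the quotients A/P is injective. -/

import Mathlib

/-- An MV-algebra: a set with ⊕ (written `+`), ¬ (written `-`) and `0`
satisfying the standard MV-algebra axioms. -/
class MVAlgebra (A : Type*) extends Add A, Neg A, Zero A where
  add_assoc : ∀ x y z : A, x + (y + z) = (x + y) + z
  add_comm : ∀ x y : A, x + y = y + x
  add_zero : ∀ x : A, x + 0 = x
  neg_neg : ∀ x : A, - -x = x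
  add_neg_zero : ∀ x : A, x + -0 = -0
  luk : ∀ x y : A, -(-x + y) + y = -(-y + x) + x

namespace MVAlgebra

variable {A : Type*} [MVAlgebra A]

/-- The top element `1 = ¬0`. -/
def one : A := -0

/-- Truncated difference `x ⊖ y = ¬(¬x ⊕ y)`. -/
def sub (x y : A) : A := -(-x + y)

/-- Supremum `x ∨ y = (x ⊖ y) ⊕ y`. -/
def sup (x y : A) : A := sub x y + y

/-- Infimum `x ∧ y = ¬(¬x ∨ ¬y)`. -/
def inf (x y : A) : A := -(sup (-x) (-y))

/-- The natural order: `x ≤ y` iff `x ⊖ y = 0`. -/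
def le (x y : A) : Prop := sub x y = 0

/-- `n • x = x ⊕ ⋯ ⊕ x` (`n` times). -/
def nsmul : ℕ → A → A
  | 0, _ => 0
  | n + 1, x => nsmul n x + x

/-- The distance `d(x,y) = (x ⊖ y) ⊕ (y ⊖ x)`. -/
def d (x y : A) : A := sub x y + sub y x

/-- Ideals: contain `0`, downward closed, closed under `⊕`. -/
def IsIdeal (I : Set A) : Prop :=
  (0 : A) ∈ I ∧ (∀ x y : A, x ∈ I → le y x → y ∈ I) ∧
    (∀ x y : A, x ∈ I → y ∈ I → x + y ∈ I)

/-- Prime ideals: proper ideals with `x ⊖ y ∈ P` or `y ⊖ x ∈ P` for all `x, y`. -/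
def IsPrime (P : Set A) : Prop :=
  IsIdeal P ∧ P ≠ Set.univ ∧ ∀ x y : A, sub x y ∈ P ∨ sub y x ∈ P

/-- The principal ideal `(a) = {x | x ≤ n·a for some n}`. -/
def princ (a : A) : Set A := {x : A | ∃ n : ℕ, le x (nsmul n a)}

end MVAlgebra

/-!
For `a ≠ 0`, Zorn's lemma gives an ideal `M` maximal among the ideals avoiding `a`.
If neither `x ⊖ y` nor `y ⊖ x` were in `M`, maximality would put `a` into the ideals generated by
`M` together with either of them, so `a ≤ p ⊕ n(x ⊖ y)` and `a ≤ p ⊕ n(y ⊖ x)` for some `p ∈ M`.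
Since `(x ⊖ y) ∧ (y ⊖ x) = 0` forces `n(x ⊖ y) ∧ n(y ⊖ x) = 0` and `⊕` distributes over `∧`,
this gives `a ≤ p`, i.e. `a ∈ M`. Hence `M` is prime.
-/

namespace MVAlgebra

variable {A : Type*} [MVAlgebra A]

lemma zero_add (x : A) : 0 + x = x := by rw [add_comm, add_zero]

lemma neg_zero_add (x : A) : -0 + x = -0 := by rw [add_comm, add_neg_zero]

lemma neg_add_self (x : A) : -x + x = -0 := by
  simpa only [neg_neg, zero_add, add_neg_zero] using luk (-0) x

lemma add_add_add_comm (a b c d : A) : a + b + (c + d) = a + c + (b + d) := by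
  rw [← add_assoc, add_assoc b c d, add_comm b c, ← add_assoc, add_assoc]

lemma nsmul_add (m n : ℕ) (x : A) : nsmul (m + n) x = nsmul m x + nsmul n x := by
  induction n with
  | zero => exact (add_zero _).symm
  | succ n ih => rw [← Nat.add_assoc, nsmul, nsmul, ih, add_assoc]

section Order

lemma sub_zero (x : A) : sub x 0 = x := by rw [sub, add_zero, neg_neg]

lemma le_refl (x : A) : le x x := by rw [le, sub, neg_add_self, neg_neg]

lemma eq_zero_of_le_zero {x : A} (h : le x 0) : x = 0 := by rwa [le, sub_zero] at h

lemma le_add_left (x y : A) : le x (y + x) := by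
  rw [le, sub, add_comm y x, add_assoc, neg_add_self, neg_zero_add, neg_neg]

lemma le_add_right (x y : A) : le x (x + y) := by
  rw [add_comm x y]; exact le_add_left x y

lemma sub_le (x y : A) : le (sub x y) x := by
  rw [le, sub, sub, neg_neg, add_comm (-x) y, ← add_assoc, neg_add_self, add_neg_zero, neg_neg]

lemma add_sub_le (x y : A) : le (sub (x + y) x) y := by
  rw [le, sub, sub, neg_neg, ← add_assoc, neg_add_self, neg_neg]

lemma sub_add_cancel_of_le {x y : A} (h : le x y) : sub y x + x = y := by
  have h' := luk x y
  rw [show -(-x + y) = 0 from h, zero_add] at h'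
  exact h'.symm

lemma le_trans {x y z : A} (hxy : le x y) (hyz : le y z) : le x z := by
  rw [← sub_add_cancel_of_le hyz, ← sub_add_cancel_of_le hxy, add_assoc]
  exact le_add_left _ _

lemma le_antisymm {x y : A} (hxy : le x y) (hyx : le y x) : x = y := by
  rw [← sub_add_cancel_of_le hxy, show sub y x = 0 from hyx, zero_add]

lemma add_le_add_left {x y : A} (h : le x y) (z : A) : le (x + z) (y + z) := by
  rw [← sub_add_cancel_of_le h, ← add_assoc]
  exact le_add_left _ _

lemma add_le_add_right {x y : A} (h : le x y) (z : A) : le (z + x) (z + y) := by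
  rw [add_comm z x, add_comm z y]; exact add_le_add_left h z

lemma add_le_add {a b c d : A} (hab : le a b) (hcd : le c d) : le (a + c) (b + d) :=
  le_trans (add_le_add_left hab c) (add_le_add_right hcd b)

lemma neg_le_neg {x y : A} (h : le x y) : le (-y) (-x) := by
  rwa [le, sub, neg_neg, add_comm]

lemma sub_le_sub_right {x y : A} (h : le x y) (z : A) : le (sub x z) (sub y z) :=
  neg_le_neg (add_le_add_left (neg_le_neg h) z)

lemma nsmul_le_nsmul {m n : ℕ} (h : m ≤ n) (x : A) : le (nsmul m x) (nsmul n x) := by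
  obtain ⟨k, rfl⟩ := Nat.exists_eq_add_of_le h
  rw [nsmul_add]
  exact le_add_right _ _

lemma eq_of_d_eq_zero {x y : A} (h : d x y = 0) : x = y := by
  have hxy : le (sub x y) 0 := h ▸ le_add_right _ _
  have hyx : le (sub y x) 0 := h ▸ le_add_left _ _
  exact le_antisymm (eq_zero_of_le_zero hxy) (eq_zero_of_le_zero hyx)

end Order

section Lattice

lemma sup_comm (x y : A) : sup x y = sup y x := luk x y

lemma le_sup_right (x y : A) : le y (sup x y) := le_add_left y (sub x y)

lemma le_sup_left (x y : A) : le x (sup x y) := sup_comm y x ▸ le_sup_right y x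

lemma sup_le {x y z : A} (hxz : le x z) (hyz : le y z) : le (sup x y) z := by
  rw [sup_comm, sup, ← sub_add_cancel_of_le hxz]
  exact add_le_add_left (sub_le_sub_right hyz x) x

lemma inf_comm (x y : A) : inf x y = inf y x := by rw [inf, inf, sup_comm]

lemma inf_le_left (x y : A) : le (inf x y) x := by
  simpa only [inf, neg_neg] using neg_le_neg (le_sup_left (-x) (-y))

lemma inf_le_right (x y : A) : le (inf x y) y := by
  simpa only [inf, neg_neg] using neg_le_neg (le_sup_right (-x) (-y))

lemma le_inf {x y z : A} (hzx : le z x) (hzy : le z y) : le z (inf x y) := by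
  simpa only [inf, neg_neg] using neg_le_neg (sup_le (neg_le_neg hzx) (neg_le_neg hzy))

lemma inf_eq_sub_sub (x y : A) : inf x y = sub x (sub x y) := by
  have h := luk (-x) (-y)
  rw [neg_neg, neg_neg] at h
  rw [inf, sup, sub, sub, sub, neg_neg, h, add_comm (-(y + -x)), add_comm y]

lemma add_inf (x y z : A) : x + inf y z = inf (x + y) (x + z) := by
  refine le_antisymm
    (le_inf (add_le_add_right (inf_le_left y z) x) (add_le_add_right (inf_le_right y z) x)) ?_
  set w := inf (x + y) (x + z)
  have hw : le (sub w x) (inf y z) :=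
    le_inf (le_trans (sub_le_sub_right (inf_le_left _ _) x) (add_sub_le x y))
      (le_trans (sub_le_sub_right (inf_le_right _ _) x) (add_sub_le x z))
  rw [add_comm x]
  exact le_trans (le_sup_left w x) (add_le_add_left hw x)

lemma inf_add_le (a b c : A) : le (inf a (b + c)) (inf a b + inf a c) := by
  rw [add_inf, add_comm (inf a b) c, add_inf, add_comm c b]
  exact le_inf (le_trans (inf_le_left _ _) (le_add_left a _))
    (le_inf (le_trans (inf_le_left _ _) (le_add_left a c)) (inf_le_right a (b + c)))

lemma neg_add_add_sub (x y : A) : -x + y + sub y x = -x + y := by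
  have key : sub (-x + y) (-x) = sub y (sub y x) := by
    have h := luk (-y) (-x)
    rw [neg_neg, neg_neg] at h
    rw [sub, sub, sub, add_comm (-x) y, h, add_comm x (-y), add_comm (-(-y + x))]
  calc -x + y + sub y x = sub (-x + y) (-x) + -x + sub y x := by
        rw [sub_add_cancel_of_le (le_add_right _ _)]
    _ = sub y (sub y x) + sub y x + -x := by
        rw [key, ← add_assoc, add_comm (-x) (sub y x), add_assoc]
    _ = -x + y := by rw [sub_add_cancel_of_le (sub_le y x), add_comm]

lemma sub_sub_sub_self (x y : A) : sub (sub x y) (sub y x) = sub x y := by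
  show -(- -(-x + y) + sub y x) = -(-x + y)
  rw [neg_neg, neg_add_add_sub]

lemma inf_sub_sub_eq_zero (x y : A) : inf (sub x y) (sub y x) = 0 := by
  rw [inf_eq_sub_sub, sub_sub_sub_self, sub, neg_add_self, neg_neg]

lemma inf_nsmul_left_eq_zero {u v : A} (h : inf u v = 0) (n : ℕ) : inf (nsmul n u) v = 0 := by
  induction n with
  | zero => exact eq_zero_of_le_zero (inf_le_left 0 v)
  | succ n ih =>
    have hle := inf_add_le v (nsmul n u) u
    rw [inf_comm v (nsmul n u), inf_comm v u, ih, h, add_zero] at hle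
    rw [nsmul, inf_comm]
    exact eq_zero_of_le_zero hle

lemma inf_nsmul_nsmul_eq_zero {u v : A} (h : inf u v = 0) (m n : ℕ) :
    inf (nsmul m u) (nsmul n v) = 0 := by
  have h' : inf v (nsmul m u) = 0 := by rw [inf_comm]; exact inf_nsmul_left_eq_zero h m
  rw [inf_comm]
  exact inf_nsmul_left_eq_zero h' n

end Lattice

section Ideals

namespace IsIdeal

variable {I : Set A}

lemma zero_mem (hI : IsIdeal I) : (0 : A) ∈ I := hI.1

lemma mem_of_le (hI : IsIdeal I) {x y : A} (hx : x ∈ I) (hyx : le y x) : y ∈ I :=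
  hI.2.1 x y hx hyx

lemma add_mem (hI : IsIdeal I) {x y : A} (hx : x ∈ I) (hy : y ∈ I) : x + y ∈ I :=
  hI.2.2 x y hx hy

end IsIdeal

lemma isIdeal_singleton_zero : IsIdeal ({0} : Set A) := by
  refine ⟨rfl, ?_, ?_⟩
  · rintro x y rfl hy
    exact eq_zero_of_le_zero hy
  · rintro x y rfl rfl
    exact add_zero 0

lemma isIdeal_sUnion {c : Set (Set A)} (hc : ∀ I ∈ c, IsIdeal I) (hchain : IsChain (· ⊆ ·) c)
    (hne : c.Nonempty) : IsIdeal (⋃₀ c) := by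
  refine ⟨?_, ?_, ?_⟩
  · obtain ⟨I, hI⟩ := hne
    exact ⟨I, hI, (hc I hI).zero_mem⟩
  · rintro x y ⟨I, hI, hx⟩ hyx
    exact ⟨I, hI, (hc I hI).mem_of_le hx hyx⟩
  · rintro x y ⟨I, hI, hx⟩ ⟨J, hJ, hy⟩
    rcases hchain.total hI hJ with hIJ | hJI
    · exact ⟨J, hJ, (hc J hJ).add_mem (hIJ hx) hy⟩
    · exact ⟨I, hI, (hc I hI).add_mem hx (hJI hy)⟩

/-- The ideal generated by `I ∪ {u}` when `I` is an ideal. -/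
def adjoin (I : Set A) (u : A) : Set A := {t | ∃ p ∈ I, ∃ n, le t (p + nsmul n u)}

variable {I : Set A}

lemma subset_adjoin (I : Set A) (u : A) : I ⊆ adjoin I u := fun p hp =>
  ⟨p, hp, 0, by rw [nsmul, add_zero]; exact le_refl p⟩

lemma mem_adjoin_self (hI : IsIdeal I) (u : A) : u ∈ adjoin I u :=
  ⟨0, hI.zero_mem, 1, by rw [nsmul, nsmul, zero_add, zero_add]; exact le_refl u⟩

lemma isIdeal_adjoin (hI : IsIdeal I) (u : A) : IsIdeal (adjoin I u) := by
  refine ⟨subset_adjoin I u hI.zero_mem, ?_, ?_⟩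
  · rintro x y ⟨p, hp, n, hx⟩ hyx
    exact ⟨p, hp, n, le_trans hyx hx⟩
  · rintro x y ⟨p, hp, m, hx⟩ ⟨q, hq, n, hy⟩
    refine ⟨p + q, hI.add_mem hp hq, m + n, ?_⟩
    rw [nsmul_add, add_add_add_comm p q]
    exact add_le_add hx hy

lemma IsIdeal.mem_of_mem_adjoin_of_inf_eq_zero (hI : IsIdeal I) {a u v : A}
    (hu : a ∈ adjoin I u) (hv : a ∈ adjoin I v) (huv : inf u v = 0) : a ∈ I := by
  obtain ⟨p, hp, m, hpu⟩ := hu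
  obtain ⟨q, hq, n, hqv⟩ := hv
  have hau : le a (p + q + nsmul (m + n) u) :=
    le_trans hpu (add_le_add (le_add_right p q) (nsmul_le_nsmul (Nat.le_add_right m n) u))
  have hav : le a (p + q + nsmul (m + n) v) :=
    le_trans hqv (add_le_add (le_add_left q p) (nsmul_le_nsmul (Nat.le_add_left n m) v))
  have ha := le_inf hau hav
  rw [← add_inf, inf_nsmul_nsmul_eq_zero huv, add_zero] at ha
  exact hI.mem_of_le (hI.add_mem hp hq) ha

variable {a : A} {M : Set A}

lemma mem_adjoin_of_maximal (hM : Maximal (fun I => IsIdeal I ∧ a ∉ I) M) {u : A} (hu : u ∉ M) :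
    a ∈ adjoin M u := by
  have hMI : IsIdeal M := hM.1.1
  by_contra ha
  exact hu (hM.2 ⟨isIdeal_adjoin hMI u, ha⟩ (subset_adjoin M u) (mem_adjoin_self hMI u))

lemma isPrime_of_maximal (hM : Maximal (fun I => IsIdeal I ∧ a ∉ I) M) : IsPrime M := by
  have hMI : IsIdeal M := hM.1.1
  refine ⟨hMI, fun h => hM.1.2 (h ▸ Set.mem_univ a), fun x y => ?_⟩
  by_contra! h
  exact hM.1.2 (hMI.mem_of_mem_adjoin_of_inf_eq_zero (mem_adjoin_of_maximal hM h.1)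
    (mem_adjoin_of_maximal hM h.2) (inf_sub_sub_eq_zero x y))

lemma exists_isPrime_not_mem (ha : a ≠ 0) : ∃ P : Set A, IsPrime P ∧ a ∉ P := by
  obtain ⟨M, -, hM⟩ := zorn_subset_nonempty {I : Set A | IsIdeal I ∧ a ∉ I}
    (fun c hc hchain hne => ⟨⋃₀ c,
      ⟨isIdeal_sUnion (fun I hI => (hc hI).1) hchain hne, fun ⟨I, hI, haI⟩ => (hc hI).2 haI⟩,
      fun _ => Set.subset_sUnion_of_mem⟩)
    {0} ⟨isIdeal_singleton_zero, ha⟩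
  exact ⟨M, isPrime_of_maximal hM, hM.1.2⟩

end Ideals

end MVAlgebra

open MVAlgebra in
/-- the intersection of all prime ideals is `{0}`; consequently
the map `a ↦ ([a]_P)_P` into the product of the quotients `A/P` is injective
(two elements with `d(a,b)` in every prime ideal are equal). -/
theorem sInter_primes_eq_zero {A : Type*} [MVAlgebra A] :
    (∀ a : A, (∀ P : Set A, IsPrime P → a ∈ P) → a = 0) ∧
    (∀ a b : A, (∀ P : Set A, IsPrime P → d a b ∈ P) → a = b) := by
  have eq_zero : ∀ a : A, (∀ P : Set A, IsPrime P → a ∈ P) → a = 0 := by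
    intro a ha
    by_contra hne
    obtain ⟨P, hP, haP⟩ := exists_isPrime_not_mem hne
    exact haP (ha P hP)
  exact ⟨eq_zero, fun a b hab => eq_of_d_eq_zero (eq_zero _ hab)⟩
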